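/- arXiv:2310.03258 — 5 statements merged into one kernel-verified Lean document; each statement's English description precedes it below -/
import Mathlib

section
/- Under ignorability, if the propensity score satisfies 0 < e(X) < 1 almost surely and the random variable A·Y/e(X) is integrable, then E[A·Y/e(X)] = E[Y₁]. -/
open MeasureTheory ProbabilityTheory

/-! With `m = σ(X)`, conditional independence of `Y₁` and `A` given `m` factorizes
`E[A·Y₁ | m] = e·E[Y₁ | m]`. Since `A·Y = A·Y₁` and `e` is `m`-measurable and a.s. nonzero,
`E[A·Y/e | m] = e⁻¹·E[A·Y₁ | m] = E[Y₁ | m]`; taking expectations gives the claim. -/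

namespace ProbabilityTheory

variable {Ω : Type*} {m : MeasurableSpace Ω} [mΩ : MeasurableSpace Ω] [StandardBorelSpace Ω]
  {μ : Measure Ω} [IsFiniteMeasure μ] {hm : m ≤ mΩ} {f g : Ω → ℝ}

/- Conditional independence makes `f` and `g` independent under almost every conditional
measure `condExpKernel μ m ω`, where the expectation of a product factorizes. -/
lemma CondIndepFun.condExp_mul_ae_eq (hfg : CondIndepFun m hm f g μ)
    (hf : Measurable f) (hg : Measurable g) (hfi : Integrable f μ) (hgi : Integrable g μ)
    (hfgi : Integrable (f * g) μ) :
    μ[f * g | m] =ᵐ[μ] μ[f | m] * μ[g | m] := by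
  have hker := (condIndepFun_iff_map_prod_eq_prod_map_map hf hg).1 hfg
  filter_upwards [ae_of_ae_trim hm hker, condExp_ae_eq_integral_condExpKernel hm hfgi,
    condExp_ae_eq_integral_condExpKernel hm hfi, condExp_ae_eq_integral_condExpKernel hm hgi]
    with ω hω hfgω hfω hgω
  have hindep : f ⟂ᵢ[condExpKernel μ m ω] g := by
    rw [indepFun_iff_map_prod_eq_prod_map_map hf.aemeasurable hg.aemeasurable]
    rwa [Kernel.prod_apply, Kernel.map_apply _ (hf.prodMk hg), Kernel.map_apply _ hf,
      Kernel.map_apply _ hg] at hω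
  rw [Pi.mul_apply, hfgω, hfω, hgω]
  exact hindep.integral_fun_mul_eq_mul_integral hf.aestronglyMeasurable hg.aestronglyMeasurable

end ProbabilityTheory

namespace MeasureTheory

variable {Ω : Type*} {m mΩ : MeasurableSpace Ω} {μ : Measure Ω} [IsFiniteMeasure μ]
  {e Z Y : Ω → ℝ}

lemma integral_div_eq_integral_of_condExp_ae_eq_mul (hm : m ≤ mΩ) (he : StronglyMeasurable[m] e)
    (he0 : ∀ᵐ ω ∂μ, e ω ≠ 0) (hZ : Integrable Z μ) (hZe : Integrable (fun ω ↦ Z ω / e ω) μ)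
    (hcond : μ[Z | m] =ᵐ[μ] e * μ[Y | m]) :
    ∫ ω, Z ω / e ω ∂μ = ∫ ω, Y ω ∂μ := by
  have hdiv : (fun ω ↦ Z ω / e ω) = (fun ω ↦ (e ω)⁻¹) * Z := by
    funext ω; exact div_eq_inv_mul _ _
  have hpull : μ[(fun ω ↦ Z ω / e ω) | m] =ᵐ[μ] (fun ω ↦ (e ω)⁻¹) * μ[Z | m] := by
    rw [hdiv] at hZe ⊢
    exact condExp_mul_of_stronglyMeasurable_left he.measurable.inv.stronglyMeasurable hZe hZ
  have hcancel : μ[(fun ω ↦ Z ω / e ω) | m] =ᵐ[μ] μ[Y | m] := by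
    filter_upwards [hpull, hcond, he0] with ω hpullω hcondω he0ω
    rw [hpullω, Pi.mul_apply, hcondω, Pi.mul_apply, inv_mul_cancel_left₀ he0ω]
  rw [← integral_condExp hm, integral_congr_ae hcancel, integral_condExp hm]

end MeasureTheory

theorem ipw_treated_arm_unbiased_general
    {Ω : Type*} [MeasurableSpace Ω] [StandardBorelSpace Ω]
    (μ : Measure Ω) [IsProbabilityMeasure μ] {d : ℕ}
    (X : Ω → (Fin d → ℝ)) (hX : Measurable X)
    (A : Ω → ℝ) (hA : Measurable A) (hA01 : ∀ ω, A ω = 0 ∨ A ω = 1)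
    (Y₀ Y₁ : Ω → ℝ) (hY₁meas : Measurable Y₁)
    (hY₁ : Integrable Y₁ μ)
    (Y : Ω → ℝ) (hY : Y = fun ω => A ω * Y₁ ω + (1 - A ω) * Y₀ ω)
    (hign : CondIndepFun (MeasurableSpace.comap X inferInstance) hX.comap_le
      (fun ω => (Y₀ ω, Y₁ ω)) A μ)
    (e : Ω → ℝ) (he : e = μ[A | MeasurableSpace.comap X inferInstance])
    (he01 : ∀ᵐ ω ∂μ, 0 < e ω ∧ e ω < 1)
    (hint : Integrable (fun ω => A ω * Y ω / e ω) μ) :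
    ∫ ω, A ω * Y ω / e ω ∂μ = ∫ ω, Y₁ ω ∂μ := by
  have hA_le : ∀ᵐ ω ∂μ, ‖A ω‖ ≤ 1 :=
    ae_of_all _ fun ω ↦ by rcases hA01 ω with h | h <;> simp [h]
  have hAY : (fun ω ↦ A ω * Y ω) = A * Y₁ := by
    funext ω; rcases hA01 ω with h | h <;> simp [hY, h]
  have hAY₁ : Integrable (A * Y₁) μ := hY₁.bdd_mul hA.aestronglyMeasurable hA_le
  have hcond : μ[fun ω ↦ A ω * Y ω | MeasurableSpace.comap X inferInstance]
      =ᵐ[μ] e * μ[Y₁ | MeasurableSpace.comap X inferInstance] := by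
    rw [hAY, he]
    exact (hign.symm.comp measurable_id measurable_snd).condExp_mul_ae_eq hA hY₁meas
      (.of_bound hA.aestronglyMeasurable 1 hA_le) hY₁ hAY₁
  exact integral_div_eq_integral_of_condExp_ae_eq_mul hX.comap_le (he ▸ stronglyMeasurable_condExp)
    (he01.mono fun ω h ↦ h.1.ne') (hAY ▸ hAY₁) hint hcond

/-- Under ignorability, if the propensity score satisfies `0 < e(X) < 1` almost surely and
`A·Y/e(X)` is integrable, then `E[A·Y/e(X)] = E[Y₁]`. -/
theorem ipw_treated_arm_unbiased
    {Ω : Type*} [MeasurableSpace Ω] [StandardBorelSpace Ω] [Nonempty Ω]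
    (μ : Measure Ω) [IsProbabilityMeasure μ] {d : ℕ}
    (X : Ω → (Fin d → ℝ)) (hX : Measurable X)
    (A : Ω → ℝ) (hA : Measurable A) (hA01 : ∀ ω, A ω = 0 ∨ A ω = 1)
    (Y₀ Y₁ : Ω → ℝ) (hY₀meas : Measurable Y₀) (hY₁meas : Measurable Y₁)
    (hY₀ : Integrable Y₀ μ) (hY₁ : Integrable Y₁ μ)
    (Y : Ω → ℝ) (hY : Y = fun ω => A ω * Y₁ ω + (1 - A ω) * Y₀ ω)
    (hign : CondIndepFun (MeasurableSpace.comap X inferInstance) hX.comap_le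
      (fun ω => (Y₀ ω, Y₁ ω)) A μ)
    (e : Ω → ℝ) (he : e = μ[A | MeasurableSpace.comap X inferInstance])
    (he01 : ∀ᵐ ω ∂μ, 0 < e ω ∧ e ω < 1)
    (hint : Integrable (fun ω => A ω * Y ω / e ω) μ) :
    ∫ ω, A ω * Y ω / e ω ∂μ = ∫ ω, Y₁ ω ∂μ :=
  ipw_treated_arm_unbiased_general μ X hX A hA hA01 Y₀ Y₁ hY₁meas hY₁ Y hY hign e he he01 hint
end

section
/- Under ignorability, if the propensity score satisfies 0 < e(X) < 1 almost surely and the random variable (1−A)·Y/(1−e(X)) is integrable, then E[(1−A)·Y/(1−e(X))] = E[Y₀]. -/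
open MeasureTheory ProbabilityTheory

/-! Conditional independence of `(Y₀, Y₁)` and `A` given `X` upgrades the propensity identity
`E[1 - A | X] = 1 - e` to `E[1 - A | X, Y₀, Y₁] = 1 - e` (check it on the π-system of sets
`{X ∈ B} ∩ {(Y₀, Y₁) ∈ C}`). Since `Y₀ / (1 - e)` is `σ(X, Y₀, Y₁)`-measurable, conditioning the
weighted outcome `(1 - A) Y₀ / (1 - e)` on that σ-algebra replaces `1 - A` by `1 - e`,
leaving `E[Y₀]`. -/

section

variable {Ω : Type*}

theorem IsPiSystem.image2_inter {C D : Set (Set Ω)} (hC : IsPiSystem C) (hD : IsPiSystem D) :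
    IsPiSystem (Set.image2 (· ∩ ·) C D) := by
  rintro _ ⟨s₁, hs₁, t₁, ht₁, rfl⟩ _ ⟨s₂, hs₂, t₂, ht₂, rfl⟩ hne
  rw [Set.inter_inter_inter_comm] at hne ⊢
  exact Set.mem_image2_of_mem (hC _ hs₁ _ hs₂ hne.left) (hD _ ht₁ _ ht₂ hne.right)

theorem MeasurableSpace.sup_eq_generateFrom_image2_inter (m₁ m₂ : MeasurableSpace Ω) :
    m₁ ⊔ m₂ =
      generateFrom (Set.image2 (· ∩ ·) {s | MeasurableSet[m₁] s} {t | MeasurableSet[m₂] t}) := by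
  refine le_antisymm (sup_le (fun s hs => ?_) (fun t ht => ?_)) ?_
  · exact measurableSet_generateFrom ⟨s, hs, Set.univ, MeasurableSet.univ, Set.inter_univ s⟩
  · exact measurableSet_generateFrom ⟨Set.univ, MeasurableSet.univ, t, ht, Set.univ_inter t⟩
  · refine generateFrom_le ?_
    rintro _ ⟨s, hs, t, ht, rfl⟩
    exact (le_sup_left (b := m₂) _ hs).inter (le_sup_right (a := m₁) _ ht)

end

namespace MeasureTheory

variable {Ω : Type*} {m mΩ : MeasurableSpace Ω} {μ : Measure Ω}

theorem setIntegral_eq_of_isPiSystem {E : Type*} [NormedAddCommGroup E] [NormedSpace ℝ E]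
    {f g : Ω → E} (hm : m ≤ mΩ) {C : Set (Set Ω)}
    (hgen : m = MeasurableSpace.generateFrom C) (hC : IsPiSystem C)
    (hf : Integrable f μ) (hg : Integrable g μ) (huniv : ∫ ω, f ω ∂μ = ∫ ω, g ω ∂μ)
    (hCeq : ∀ s ∈ C, ∫ ω in s, f ω ∂μ = ∫ ω in s, g ω ∂μ) {s : Set Ω}
    (hs : MeasurableSet[m] s) : ∫ ω in s, f ω ∂μ = ∫ ω in s, g ω ∂μ := by
  induction s, hs using MeasurableSpace.induction_on_inter hgen hC with
  | empty => simp
  | basic s hs => exact hCeq s hs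
  | compl s hs hfg =>
    rw [setIntegral_compl (hm s hs) hf, setIntegral_compl (hm s hs) hg, huniv, hfg]
  | iUnion s hdisj hs hfg =>
    rw [integral_iUnion (fun i => hm _ (hs i)) hdisj hf.integrableOn,
      integral_iUnion (fun i => hm _ (hs i)) hdisj hg.integrableOn]
    exact tsum_congr hfg

theorem integral_indicator_mul_div_condExp [IsFiniteMeasure μ] (hm : m ≤ mΩ) {T : Set Ω}
    (hT : MeasurableSet T) {Z : Ω → ℝ} (hZ : StronglyMeasurable[m] Z)
    (hpos : ∀ᵐ ω ∂μ, (μ⟦T | m⟧) ω ≠ 0)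
    (hint : Integrable (fun ω => T.indicator (fun _ => (1 : ℝ)) ω * Z ω / (μ⟦T | m⟧) ω) μ) :
    ∫ ω, T.indicator (fun _ => (1 : ℝ)) ω * Z ω / (μ⟦T | m⟧) ω ∂μ = ∫ ω, Z ω ∂μ := by
  set r : Ω → ℝ := fun ω => Z ω / (μ⟦T | m⟧) ω
  have hr : StronglyMeasurable[m] r :=
    (hZ.measurable.div stronglyMeasurable_condExp.measurable).stronglyMeasurable
  have hrT : (fun ω => T.indicator (fun _ => (1 : ℝ)) ω * Z ω / (μ⟦T | m⟧) ω)
      = r * T.indicator fun _ => (1 : ℝ) := by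
    ext ω
    simp only [r, Pi.mul_apply]
    ring
  rw [hrT] at hint ⊢
  calc ∫ ω, (r * T.indicator fun _ => (1 : ℝ)) ω ∂μ
      = ∫ ω, (μ[r * T.indicator fun _ => (1 : ℝ) | m]) ω ∂μ := (integral_condExp hm).symm
    _ = ∫ ω, (r * μ⟦T | m⟧) ω ∂μ :=
        integral_congr_ae (condExp_mul_of_stronglyMeasurable_left hr hint
          ((integrable_const 1).indicator hT))
    _ = ∫ ω, Z ω ∂μ := by
        refine integral_congr_ae ?_
        filter_upwards [hpos] with ω hω
        exact div_mul_cancel₀ (Z ω) hω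

end MeasureTheory

namespace ProbabilityTheory

section Binary

variable {Ω : Type*} {m mΩ : MeasurableSpace Ω} {μ : Measure Ω} [IsFiniteMeasure μ] {A : Ω → ℝ}

theorem indicator_preimage_zero_eq_one_sub (hA01 : ∀ ω, A ω = 0 ∨ A ω = 1) :
    (A ⁻¹' {0}).indicator (fun _ => (1 : ℝ)) = 1 - A := by
  ext ω
  rcases hA01 ω with h | h <;> simp [h]

theorem condExp_indicator_preimage_zero (hm : m ≤ mΩ) (hA : Measurable A)
    (hA01 : ∀ ω, A ω = 0 ∨ A ω = 1) : μ⟦A ⁻¹' {0} | m⟧ =ᵐ[μ] 1 - μ[A | m] := by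
  have hA_int : Integrable A μ := .of_bound hA.aestronglyMeasurable 1
    (ae_of_all _ fun ω => by rcases hA01 ω with h | h <;> simp [h])
  have hsub := condExp_sub (μ := μ) (integrable_const (1 : ℝ)) hA_int m
  rw [condExp_const hm] at hsub
  rw [indicator_preimage_zero_eq_one_sub hA01]
  exact hsub

end Binary

section CondIndep

variable {Ω : Type*} {m' m₁ m₂ mΩ : MeasurableSpace Ω} [StandardBorelSpace Ω] {μ : Measure Ω}
  [IsFiniteMeasure μ]

theorem CondIndep.condExp_indicator_sup_eq {hm' : m' ≤ mΩ} (hm₁ : m₁ ≤ mΩ) (hm₂ : m₂ ≤ mΩ)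
    (hind : CondIndep m' m₁ m₂ hm' μ) {t : Set Ω} (ht : MeasurableSet[m₂] t) :
    μ⟦t | m' ⊔ m₁⟧ =ᵐ[μ] μ⟦t | m'⟧ := by
  have hsup : m' ⊔ m₁ ≤ mΩ := sup_le hm' hm₁
  have ht' : MeasurableSet t := hm₂ t ht
  have hindicator : ∀ {s : Set Ω}, MeasurableSet s →
      Integrable (s.indicator fun _ => (1 : ℝ)) μ :=
    fun hs => (integrable_const 1).indicator hs
  symm
  refine ae_eq_condExp_of_forall_setIntegral_eq hsup (hindicator ht')
    (fun _ _ _ => integrable_condExp.integrableOn) (fun s hs _ => ?_)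
    (stronglyMeasurable_condExp.mono (le_sup_left : m' ≤ m' ⊔ m₁)).aestronglyMeasurable
  refine setIntegral_eq_of_isPiSystem hsup (MeasurableSpace.sup_eq_generateFrom_image2_inter _ _)
    ((@MeasurableSpace.isPiSystem_measurableSet Ω m').image2_inter
      (@MeasurableSpace.isPiSystem_measurableSet Ω m₁))
    integrable_condExp (hindicator ht') (integral_condExp hm') ?_ hs
  rintro _ ⟨s, hs, u, hu, rfl⟩
  have hu' : MeasurableSet u := hm₁ u hu
  have hprod : μ⟦t | m'⟧ * u.indicator (fun _ => (1 : ℝ)) = u.indicator (μ⟦t | m'⟧) := by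
    ext ω
    by_cases hω : ω ∈ u <;> simp [hω]
  calc ∫ ω in s ∩ u, (μ⟦t | m'⟧) ω ∂μ
      = ∫ ω in s, (μ⟦t | m'⟧ * u.indicator fun _ => (1 : ℝ)) ω ∂μ := by
        rw [hprod, setIntegral_indicator hu']
    _ = ∫ ω in s, (μ⟦t | m'⟧ * μ⟦u | m'⟧) ω ∂μ := by
        rw [← setIntegral_condExp hm' (hprod ▸ integrable_condExp.indicator hu') hs]
        refine setIntegral_congr_ae (hm' s hs) ?_
        filter_upwards [condExp_mul_of_stronglyMeasurable_left stronglyMeasurable_condExp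
          (hprod ▸ integrable_condExp.indicator hu') (hindicator hu')] with ω hω _ using hω
    _ = ∫ ω in s, (μ⟦u ∩ t | m'⟧) ω ∂μ := by
        refine setIntegral_congr_ae (hm' s hs) ?_
        filter_upwards [(condIndep_iff _ _ _ _ hm₁ hm₂ μ).mp hind u t hu ht] with ω hω _
        rw [hω, Pi.mul_apply, Pi.mul_apply, mul_comm]
    _ = ∫ ω in s ∩ u, (t.indicator fun _ => (1 : ℝ)) ω ∂μ := by
        rw [setIntegral_condExp hm' (hindicator (hu'.inter ht')) hs,
          setIntegral_indicator (hu'.inter ht'), setIntegral_indicator ht', Set.inter_assoc]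

theorem CondIndep.integral_indicator_mul_div_condExp {hm' : m' ≤ mΩ} (hm₁ : m₁ ≤ mΩ)
    (hm₂ : m₂ ≤ mΩ) (hind : CondIndep m' m₁ m₂ hm' μ) {t : Set Ω} (ht : MeasurableSet[m₂] t)
    {Z : Ω → ℝ} (hZ : StronglyMeasurable[m' ⊔ m₁] Z) (hpos : ∀ᵐ ω ∂μ, (μ⟦t | m'⟧) ω ≠ 0)
    (hint : Integrable (fun ω => t.indicator (fun _ => (1 : ℝ)) ω * Z ω / (μ⟦t | m'⟧) ω) μ) :
    ∫ ω, t.indicator (fun _ => (1 : ℝ)) ω * Z ω / (μ⟦t | m'⟧) ω ∂μ = ∫ ω, Z ω ∂μ := by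
  have hsup := hind.condExp_indicator_sup_eq hm₁ hm₂ ht
  have hrepr : (fun ω => t.indicator (fun _ => (1 : ℝ)) ω * Z ω / (μ⟦t | m'⟧) ω) =ᵐ[μ]
      fun ω => t.indicator (fun _ => (1 : ℝ)) ω * Z ω / (μ⟦t | m' ⊔ m₁⟧) ω := by
    filter_upwards [hsup] with ω hω
    rw [hω]
  rw [integral_congr_ae hrepr]
  refine MeasureTheory.integral_indicator_mul_div_condExp (sup_le hm' hm₁) (hm₂ t ht) hZ ?_
    (hint.congr hrepr)
  filter_upwards [hsup, hpos] with ω hω hω'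
  rwa [hω]

end CondIndep

end ProbabilityTheory

theorem ipw_control_arm_unbiased_general
    {Ω : Type*} [MeasurableSpace Ω] [StandardBorelSpace Ω]
    (μ : Measure Ω) [IsProbabilityMeasure μ] {d : ℕ}
    (X : Ω → (Fin d → ℝ)) (hX : Measurable X)
    (A : Ω → ℝ) (hA : Measurable A) (hA01 : ∀ ω, A ω = 0 ∨ A ω = 1)
    (Y₀ Y₁ : Ω → ℝ) (hY₀meas : Measurable Y₀) (hY₁meas : Measurable Y₁)
    (Y : Ω → ℝ) (hY : Y = fun ω => A ω * Y₁ ω + (1 - A ω) * Y₀ ω)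
    (hign : CondIndepFun (MeasurableSpace.comap X inferInstance) hX.comap_le
      (fun ω => (Y₀ ω, Y₁ ω)) A μ)
    (e : Ω → ℝ) (he : e = μ[A | MeasurableSpace.comap X inferInstance])
    (he01 : ∀ᵐ ω ∂μ, 0 < e ω ∧ e ω < 1)
    (hint : Integrable (fun ω => (1 - A ω) * Y ω / (1 - e ω)) μ) :
    ∫ ω, (1 - A ω) * Y ω / (1 - e ω) ∂μ = ∫ ω, Y₀ ω ∂μ := by
  have hW : Measurable fun ω => (Y₀ ω, Y₁ ω) := hY₀meas.prodMk hY₁meas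
  have hT : MeasurableSet[MeasurableSpace.comap A inferInstance] (A ⁻¹' {0}) :=
    ⟨{0}, measurableSet_singleton 0, rfl⟩
  have hpX : μ⟦A ⁻¹' {0} | MeasurableSpace.comap X inferInstance⟧ =ᵐ[μ] 1 - e :=
    he ▸ condExp_indicator_preimage_zero hX.comap_le hA hA01
  have hY₀ : Measurable[MeasurableSpace.comap X inferInstance ⊔
      MeasurableSpace.comap (fun ω => (Y₀ ω, Y₁ ω)) inferInstance] Y₀ :=
    (measurable_fst.comp (comap_measurable _)).mono le_sup_right le_rfl
  have hrepr : (fun ω => (1 - A ω) * Y ω / (1 - e ω)) =ᵐ[μ] fun ω =>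
      (A ⁻¹' {0}).indicator (fun _ => (1 : ℝ)) ω * Y₀ ω /
        (μ⟦A ⁻¹' {0} | MeasurableSpace.comap X inferInstance⟧) ω := by
    filter_upwards [hpX] with ω hω
    rw [hω, indicator_preimage_zero_eq_one_sub hA01, hY]
    rcases hA01 ω with h | h <;> simp [h]
  rw [integral_congr_ae hrepr]
  refine ((condIndepFun_iff_condIndep _ _ _ _ _).mp hign).integral_indicator_mul_div_condExp
    hW.comap_le hA.comap_le hT hY₀.stronglyMeasurable ?_ (hint.congr hrepr)
  filter_upwards [hpX, he01] with ω hω hω'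
  rw [hω, Pi.sub_apply, Pi.one_apply]
  exact (sub_pos.2 hω'.2).ne'

/-- Under ignorability, if the propensity score satisfies `0 < e(X) < 1` almost surely and
`(1−A)·Y/(1−e(X))` is integrable, then `E[(1−A)·Y/(1−e(X))] = E[Y₀]`. -/
theorem ipw_control_arm_unbiased
    {Ω : Type*} [MeasurableSpace Ω] [StandardBorelSpace Ω] [Nonempty Ω]
    (μ : Measure Ω) [IsProbabilityMeasure μ] {d : ℕ}
    (X : Ω → (Fin d → ℝ)) (hX : Measurable X)
    (A : Ω → ℝ) (hA : Measurable A) (hA01 : ∀ ω, A ω = 0 ∨ A ω = 1)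
    (Y₀ Y₁ : Ω → ℝ) (hY₀meas : Measurable Y₀) (hY₁meas : Measurable Y₁)
    (hY₀ : Integrable Y₀ μ) (hY₁ : Integrable Y₁ μ)
    (Y : Ω → ℝ) (hY : Y = fun ω => A ω * Y₁ ω + (1 - A ω) * Y₀ ω)
    (hign : CondIndepFun (MeasurableSpace.comap X inferInstance) hX.comap_le
      (fun ω => (Y₀ ω, Y₁ ω)) A μ)
    (e : Ω → ℝ) (he : e = μ[A | MeasurableSpace.comap X inferInstance])
    (he01 : ∀ᵐ ω ∂μ, 0 < e ω ∧ e ω < 1)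
    (hint : Integrable (fun ω => (1 - A ω) * Y ω / (1 - e ω)) μ) :
    ∫ ω, (1 - A ω) * Y ω / (1 - e ω) ∂μ = ∫ ω, Y₀ ω ∂μ :=
  ipw_control_arm_unbiased_general μ X hX A hA hA01 Y₀ Y₁ hY₀meas hY₁meas Y hY hign e he he01 hint
end

section
/- Under ignorability, if the propensity score satisfies 0 < e(X) < 1 almost surely and both A·Y/e(X) and (1−A)·Y/(1−e(X)) are integrable, then E[A·Y/e(X)] − E[(1−A)·Y/(1−e(X))] = E[Y₁] − E[Y₀] = τ; i.e., the average causal effect is identified by the inverse-probability-weighted functional of the observed data distribution. -/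
/-!
Ignorability says that the treatment `A` is conditionally independent of `(Y₀, Y₁)` given
`σ(X)`. Testing against the π-system of sets `s ∩ {(Y₀, Y₁) ∈ t}` with `s ∈ σ(X)` shows that
then `E[A | X, Y₀, Y₁] = E[A | X] = e(X)`. As `Y₁ / e(X)` is measurable for `σ(X, Y₀, Y₁)`, it
can be pulled out of `E[A·Y₁/e(X) | X, Y₀, Y₁] = (Y₁ / e(X))·e(X) = Y₁`, and taking expectations
gives `E[A·Y/e(X)] = E[Y₁]`. The control arm is the same argument for `1 − A` and `Y₀`.
-/

open MeasureTheory ProbabilityTheory Set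

namespace MeasurableSpace

variable {α : Type*}

theorem isPiSystem_image2_inter (m₁ m₂ : MeasurableSpace α) :
    IsPiSystem (image2 (· ∩ ·) {s | MeasurableSet[m₁] s} {t | MeasurableSet[m₂] t}) := by
  rintro _ ⟨s₁, hs₁, t₁, ht₁, rfl⟩ _ ⟨s₂, hs₂, t₂, ht₂, rfl⟩ -
  refine ⟨s₁ ∩ s₂, hs₁.inter hs₂, t₁ ∩ t₂, ht₁.inter ht₂, ?_⟩
  simp only [inter_inter_inter_comm]

theorem sup_eq_generateFrom_image2_inter_s2 (m₁ m₂ : MeasurableSpace α) :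
    m₁ ⊔ m₂ =
      generateFrom (image2 (· ∩ ·) {s | MeasurableSet[m₁] s} {t | MeasurableSet[m₂] t}) := by
  refine le_antisymm (sup_le ?_ ?_) (generateFrom_le ?_)
  · exact fun s hs ↦ measurableSet_generateFrom ⟨s, hs, univ, .univ, inter_univ s⟩
  · exact fun t ht ↦ measurableSet_generateFrom ⟨univ, .univ, t, ht, univ_inter t⟩
  · rintro _ ⟨s, hs, t, ht, rfl⟩
    exact (le_sup_left (b := m₂) s hs).inter (le_sup_right (a := m₁) t ht)

end MeasurableSpace

theorem setIntegral_eq_of_isPiSystem {Ω E : Type*} [NormedAddCommGroup E] [NormedSpace ℝ E]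
    {m m₀ : MeasurableSpace Ω} {μ : Measure Ω} (hm : m ≤ m₀) {S : Set (Set Ω)}
    (hgen : m = MeasurableSpace.generateFrom S) (hS : IsPiSystem S) {f g : Ω → E}
    (hf : Integrable f μ) (hg : Integrable g μ) (huniv : ∫ x, f x ∂μ = ∫ x, g x ∂μ)
    (hbasic : ∀ s ∈ S, ∫ x in s, f x ∂μ = ∫ x in s, g x ∂μ) :
    ∀ s, MeasurableSet[m] s → ∫ x in s, f x ∂μ = ∫ x in s, g x ∂μ := by
  intro s hs
  induction s, hs using MeasurableSpace.induction_on_inter hgen hS with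
  | empty => simp
  | basic s hs => exact hbasic s hs
  | compl s hs ih =>
    rw [setIntegral_compl (hm s hs) hf, setIntegral_compl (hm s hs) hg, ih, huniv]
  | iUnion s hdisj hs ih =>
    have hs₀ i := hm _ (hs i)
    rw [← (hasSum_integral_iUnion hs₀ hdisj hf.integrableOn).tsum_eq,
      ← (hasSum_integral_iUnion hs₀ hdisj hg.integrableOn).tsum_eq]
    exact tsum_congr ih

theorem integral_mul_div_eq_of_condExp_ae_eq {Ω : Type*} {m mΩ : MeasurableSpace Ω}
    {μ : Measure Ω} (hm : m ≤ mΩ) [SigmaFinite (μ.trim hm)] {W g p : Ω → ℝ}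
    (hW : Integrable W μ) (hg : StronglyMeasurable[m] g) (hp : StronglyMeasurable[m] p)
    (hWp : μ[W | m] =ᵐ[μ] p) (hp0 : ∀ᵐ ω ∂μ, p ω ≠ 0)
    (hint : Integrable (fun ω ↦ W ω * g ω / p ω) μ) :
    ∫ ω, W ω * g ω / p ω ∂μ = ∫ ω, g ω ∂μ := by
  have hprod : (fun ω ↦ W ω * g ω / p ω) = g / p * W := by
    ext ω; simp only [Pi.mul_apply, Pi.div_apply]; ring
  rw [hprod] at hint ⊢
  rw [← integral_condExp hm]
  refine integral_congr_ae ?_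
  filter_upwards [condExp_mul_of_stronglyMeasurable_left
    (hg.measurable.div hp.measurable).stronglyMeasurable hint hW, hWp, hp0]
    with ω h_pull h_prop h_ne
  rw [h_pull, Pi.mul_apply, h_prop, Pi.div_apply, div_mul_cancel₀ _ h_ne]

section CondIndep

variable {Ω : Type*} {m m₂ mΩ : MeasurableSpace Ω} {μ : Measure Ω} [IsFiniteMeasure μ]

theorem integrable_of_forall_eq_zero_or_eq_one {A : Ω → ℝ} (hA : Measurable A)
    (hA01 : ∀ ω, A ω = 0 ∨ A ω = 1) : Integrable A μ :=
  .of_bound hA.aestronglyMeasurable 1 (.of_forall fun ω ↦ by rcases hA01 ω with h | h <;> simp [h])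

theorem condExp_one_sub (hm : m ≤ mΩ) {A : Ω → ℝ} (hA : Integrable A μ) :
    μ[fun ω ↦ 1 - A ω | m] =ᵐ[μ] fun ω ↦ 1 - (μ[A | m]) ω := by
  filter_upwards [condExp_sub (integrable_const 1) hA m] with ω h_sub
  rw [show (fun ω ↦ 1 - A ω) = (fun _ ↦ (1 : ℝ)) - A from rfl, h_sub, Pi.sub_apply,
    condExp_const hm]

theorem setIntegral_inter_condExp_indicator (hm : m ≤ mΩ) {s t C : Set Ω}
    (hs : MeasurableSet[m] s) (ht : MeasurableSet t) (hC : MeasurableSet C)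
    (hfac : μ⟦t ∩ C | m⟧ =ᵐ[μ] fun ω ↦ (μ⟦t | m⟧) ω * (μ⟦C | m⟧) ω) :
    ∫ ω in s ∩ t, (μ⟦C | m⟧) ω ∂μ = ∫ ω in s ∩ t, C.indicator (fun _ ↦ (1 : ℝ)) ω ∂μ := by
  set p := μ⟦C | m⟧
  set b := t.indicator fun _ ↦ (1 : ℝ)
  have hb : Integrable b μ := (integrable_const 1).indicator ht
  have hpb : p * b = t.indicator p := by
    ext ω; by_cases hω : ω ∈ t <;> simp [p, b, hω]
  have h_pull : μ[p * b | m] =ᵐ[μ] fun ω ↦ (μ⟦t | m⟧) ω * p ω := by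
    filter_upwards [condExp_mul_of_stronglyMeasurable_left stronglyMeasurable_condExp
      (hpb ▸ integrable_condExp.indicator ht) hb] with ω hω
    rw [hω, Pi.mul_apply, mul_comm]
  calc ∫ ω in s ∩ t, p ω ∂μ
      = ∫ ω in s, (μ[p * b | m]) ω ∂μ := by
        rw [setIntegral_condExp hm (hpb ▸ integrable_condExp.indicator ht) hs, hpb,
          setIntegral_indicator ht]
    _ = ∫ ω in s, (μ⟦t ∩ C | m⟧) ω ∂μ :=
        setIntegral_congr_ae (hm s hs) ((h_pull.trans hfac.symm).mono fun _ h _ ↦ h)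
    _ = ∫ ω in s ∩ t, C.indicator (fun _ ↦ (1 : ℝ)) ω ∂μ := by
        rw [setIntegral_condExp hm ((integrable_const 1).indicator (ht.inter hC)) hs,
          ← setIntegral_indicator ht, indicator_indicator]

theorem condExp_indicator_sup_ae_eq (hm : m ≤ mΩ) (hm₂ : m₂ ≤ mΩ)
    {C : Set Ω} (hC : MeasurableSet C)
    (hfac : ∀ t, MeasurableSet[m₂] t →
      μ⟦t ∩ C | m⟧ =ᵐ[μ] fun ω ↦ (μ⟦t | m⟧) ω * (μ⟦C | m⟧) ω) :
    μ⟦C | m ⊔ m₂⟧ =ᵐ[μ] μ⟦C | m⟧ := by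
  have hsup : m ⊔ m₂ ≤ mΩ := sup_le hm hm₂
  have hC_int : Integrable (C.indicator fun _ ↦ (1 : ℝ)) μ := (integrable_const 1).indicator hC
  refine (ae_eq_condExp_of_forall_setIntegral_eq hsup hC_int
    (fun _ _ _ ↦ integrable_condExp.integrableOn) (fun s hs _ ↦ ?_)
    (stronglyMeasurable_condExp.mono (le_sup_left : m ≤ m ⊔ m₂)).aestronglyMeasurable).symm
  refine setIntegral_eq_of_isPiSystem hsup (MeasurableSpace.sup_eq_generateFrom_image2_inter_s2 m m₂)
    (MeasurableSpace.isPiSystem_image2_inter m m₂) integrable_condExp hC_int (integral_condExp hm)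
    ?_ s hs
  rintro _ ⟨s, hs, t, ht, rfl⟩
  exact setIntegral_inter_condExp_indicator hm hs (hm₂ t ht) hC (hfac t ht)

theorem ProbabilityTheory.CondIndepFun.condExp_sup_comap_ae_eq [StandardBorelSpace Ω]
    {β : Type*} [mβ : MeasurableSpace β] {f : Ω → β} {A : Ω → ℝ} (hm : m ≤ mΩ)
    (hf : Measurable f) (hA : Measurable A) (hA01 : ∀ ω, A ω = 0 ∨ A ω = 1)
    (h : CondIndepFun m hm f A μ) :
    μ[A | m ⊔ mβ.comap f] =ᵐ[μ] μ[A | m] := by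
  have hA_ind : A = (A ⁻¹' {1}).indicator fun _ ↦ 1 := by
    ext ω; rcases hA01 ω with h | h <;> simp [h]
  rw [hA_ind]
  refine condExp_indicator_sup_ae_eq hm hf.comap_le (hA (measurableSet_singleton 1)) ?_
  rintro _ ⟨t, ht, rfl⟩
  exact (condIndepFun_iff_condExp_inter_preimage_eq_mul hf hA).1 h t {1} ht
    (measurableSet_singleton 1)

theorem ProbabilityTheory.CondIndepFun.integral_mul_div_eq [StandardBorelSpace Ω]
    {β : Type*} [mβ : MeasurableSpace β] {f : Ω → β} {A p : Ω → ℝ} {g : β → ℝ} (hm : m ≤ mΩ)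
    (hf : Measurable f) (hA : Measurable A) (hA01 : ∀ ω, A ω = 0 ∨ A ω = 1) (hg : Measurable g)
    (h : CondIndepFun m hm f A μ) (hp : StronglyMeasurable[m] p) (hAp : μ[A | m] =ᵐ[μ] p)
    (hp0 : ∀ᵐ ω ∂μ, p ω ≠ 0) (hint : Integrable (fun ω ↦ A ω * g (f ω) / p ω) μ) :
    ∫ ω, A ω * g (f ω) / p ω ∂μ = ∫ ω, g (f ω) ∂μ :=
  integral_mul_div_eq_of_condExp_ae_eq (sup_le hm hf.comap_le)
    (integrable_of_forall_eq_zero_or_eq_one hA hA01)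
    (hg.comp ((comap_measurable f).mono (le_sup_right : mβ.comap f ≤ m ⊔ mβ.comap f)
      le_rfl)).stronglyMeasurable
    (hp.mono le_sup_left) ((h.condExp_sup_comap_ae_eq hm hf hA hA01).trans hAp) hp0 hint

end CondIndep

theorem ipw_identifies_average_causal_effect_general
    {Ω : Type*} [MeasurableSpace Ω] [StandardBorelSpace Ω]
    (μ : Measure Ω) [IsProbabilityMeasure μ] {d : ℕ}
    (X : Ω → (Fin d → ℝ)) (hX : Measurable X)
    (A : Ω → ℝ) (hA : Measurable A) (hA01 : ∀ ω, A ω = 0 ∨ A ω = 1)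
    (Y₀ Y₁ : Ω → ℝ) (hY₀meas : Measurable Y₀) (hY₁meas : Measurable Y₁)
    (Y : Ω → ℝ) (hY : Y = fun ω => A ω * Y₁ ω + (1 - A ω) * Y₀ ω)
    (hign : CondIndepFun (MeasurableSpace.comap X inferInstance) hX.comap_le
      (fun ω => (Y₀ ω, Y₁ ω)) A μ)
    (e : Ω → ℝ) (he : e = μ[A | MeasurableSpace.comap X inferInstance])
    (he01 : ∀ᵐ ω ∂μ, 0 < e ω ∧ e ω < 1)
    (hint₁ : Integrable (fun ω => A ω * Y ω / e ω) μ)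
    (hint₀ : Integrable (fun ω => (1 - A ω) * Y ω / (1 - e ω)) μ)
    (τ : ℝ) (hτ : τ = ∫ ω, Y₁ ω ∂μ - ∫ ω, Y₀ ω ∂μ) :
    (∫ ω, A ω * Y ω / e ω ∂μ) - ∫ ω, (1 - A ω) * Y ω / (1 - e ω) ∂μ = τ := by
  have hf : Measurable fun ω => (Y₀ ω, Y₁ ω) := hY₀meas.prodMk hY₁meas
  have hA01' : ∀ ω, 1 - A ω = 0 ∨ 1 - A ω = 1 := fun ω ↦ by
    rcases hA01 ω with h | h <;> simp [h]
  have he_meas : StronglyMeasurable[MeasurableSpace.comap X inferInstance] e :=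
    he ▸ stronglyMeasurable_condExp
  have hY_treated : (fun ω ↦ A ω * Y ω / e ω) = fun ω ↦ A ω * Y₁ ω / e ω := by
    ext ω; rcases hA01 ω with h | h <;> simp [hY, h]
  have hY_control :
      (fun ω ↦ (1 - A ω) * Y ω / (1 - e ω)) = fun ω ↦ (1 - A ω) * Y₀ ω / (1 - e ω) := by
    ext ω; rcases hA01 ω with h | h <;> simp [hY, h]
  have h_treated : ∫ ω, A ω * Y₁ ω / e ω ∂μ = ∫ ω, Y₁ ω ∂μ :=
    hign.integral_mul_div_eq (g := Prod.snd) hX.comap_le hf hA hA01 measurable_snd he_meas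
      he.symm.eventuallyEq (he01.mono fun ω h ↦ h.1.ne') (hY_treated ▸ hint₁)
  have h_control : ∫ ω, (1 - A ω) * Y₀ ω / (1 - e ω) ∂μ = ∫ ω, Y₀ ω ∂μ :=
    (hign.comp measurable_id (measurable_const.sub measurable_id)).integral_mul_div_eq
      (A := fun ω ↦ 1 - A ω) (g := Prod.fst) hX.comap_le hf (measurable_const.sub hA) hA01'
      measurable_fst (stronglyMeasurable_const.sub he_meas)
      (he ▸ condExp_one_sub hX.comap_le (integrable_of_forall_eq_zero_or_eq_one hA hA01))
      (he01.mono fun ω h ↦ (sub_pos.2 h.2).ne') (hY_control ▸ hint₀)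
  rw [hY_treated, hY_control, h_treated, h_control, hτ]

/-- Under ignorability, if the propensity score satisfies `0 < e(X) < 1` almost surely and both
`A·Y/e(X)` and `(1−A)·Y/(1−e(X))` are integrable, then
`E[A·Y/e(X)] − E[(1−A)·Y/(1−e(X))] = E[Y₁] − E[Y₀] = τ`: the average causal effect is identified
by the inverse-probability-weighted functional of the observed data distribution. -/
theorem ipw_identifies_average_causal_effect
    {Ω : Type*} [MeasurableSpace Ω] [StandardBorelSpace Ω] [Nonempty Ω]
    (μ : Measure Ω) [IsProbabilityMeasure μ] {d : ℕ}
    (X : Ω → (Fin d → ℝ)) (hX : Measurable X)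
    (A : Ω → ℝ) (hA : Measurable A) (hA01 : ∀ ω, A ω = 0 ∨ A ω = 1)
    (Y₀ Y₁ : Ω → ℝ) (hY₀meas : Measurable Y₀) (hY₁meas : Measurable Y₁)
    (hY₀ : Integrable Y₀ μ) (hY₁ : Integrable Y₁ μ)
    (Y : Ω → ℝ) (hY : Y = fun ω => A ω * Y₁ ω + (1 - A ω) * Y₀ ω)
    (hign : CondIndepFun (MeasurableSpace.comap X inferInstance) hX.comap_le
      (fun ω => (Y₀ ω, Y₁ ω)) A μ)
    (e : Ω → ℝ) (he : e = μ[A | MeasurableSpace.comap X inferInstance])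
    (he01 : ∀ᵐ ω ∂μ, 0 < e ω ∧ e ω < 1)
    (hint₁ : Integrable (fun ω => A ω * Y ω / e ω) μ)
    (hint₀ : Integrable (fun ω => (1 - A ω) * Y ω / (1 - e ω)) μ)
    (τ : ℝ) (hτ : τ = ∫ ω, Y₁ ω ∂μ - ∫ ω, Y₀ ω ∂μ) :
    (∫ ω, A ω * Y ω / e ω ∂μ) - ∫ ω, (1 - A ω) * Y ω / (1 - e ω) ∂μ = τ :=
  ipw_identifies_average_causal_effect_general μ X hX A hA hA01 Y₀ Y₁ hY₀meas hY₁meas Y hY hign e he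
    he01 hint₁ hint₀ τ hτ
end

section
/- Let g : ℝ → ℝ be L-Lipschitz (L > 0), let β, β̂ ∈ ℝ^d, and let (xᵢ, aᵢ, yᵢ) ∈ ℝ^d × {0,1} × ℝ, i = 1, …, n, satisfy ‖xᵢ‖_∞ ≤ M_X, |yᵢ| ≤ M_Y, and m ≤ g(xᵢᵀβ) ≤ 1 − m for all i, where M_X, M_Y > 0 and 0 < m < 1/2. Define τ̂(b) = (1/n) Σᵢ ( aᵢyᵢ/g(xᵢᵀb) − (1−aᵢ)yᵢ/(1−g(xᵢᵀb)) ). If M_X·L·‖β̂ − β‖₁ ≤ m/2, then | τ̂(β̂) − τ̂(β) | ≤ 4 M_X M_Y L ‖β̂ − β‖₁ / m². -/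
/-- Deterministic stability bound for the IPW estimate of the average causal effect:
if `M_X·L·‖β̂ − β‖₁ ≤ m/2` then `|τ̂(β̂) − τ̂(β)| ≤ 4 M_X M_Y L ‖β̂ − β‖₁ / m²`, where
`τ̂(b) = (1/n) Σᵢ (aᵢyᵢ/g(xᵢᵀb) − (1−aᵢ)yᵢ/(1−g(xᵢᵀb)))`. -/
theorem ipw_estimator_perturbation_bound
    {d n : ℕ} (g : ℝ → ℝ) (L : ℝ) (hL : 0 < L)
    (hg : ∀ w₁ w₂, |g w₁ - g w₂| ≤ L * |w₁ - w₂|)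
    (β βhat : Fin d → ℝ) (x : Fin n → Fin d → ℝ) (a y : Fin n → ℝ)
    (M_X M_Y m : ℝ) (hMX : 0 < M_X) (hMY : 0 < M_Y) (hm : 0 < m) (hm2 : m < 1 / 2)
    (hx : ∀ i j, |x i j| ≤ M_X) (ha : ∀ i, a i = 0 ∨ a i = 1) (hy : ∀ i, |y i| ≤ M_Y)
    (hgbd : ∀ i, m ≤ g (∑ j, x i j * β j) ∧ g (∑ j, x i j * β j) ≤ 1 - m)
    (τhat : (Fin d → ℝ) → ℝ)
    (hτhat : τhat = fun b => (1 / n : ℝ) * ∑ i,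
      (a i * y i / g (∑ j, x i j * b j) - (1 - a i) * y i / (1 - g (∑ j, x i j * b j))))
    (hclose : M_X * L * (∑ j, |βhat j - β j|) ≤ m / 2) :
    |τhat βhat - τhat β| ≤ 4 * M_X * M_Y * L * (∑ j, |βhat j - β j|) / m ^ 2 := by
  subst hτhat
  set Δ : ℝ := ∑ j, |βhat j - β j| with hΔdef
  have hΔ0 : 0 ≤ Δ := Finset.sum_nonneg fun j _ => abs_nonneg _
  have hm2' : (0:ℝ) < m / 2 := by linarith
  have hRHS0 : 0 ≤ 4 * M_X * M_Y * L * Δ / m ^ 2 := by positivity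
  rcases Nat.eq_zero_or_pos n with hn | hn
  · subst hn
    simp [hRHS0]
  have hnpos : (0:ℝ) < n := by exact_mod_cast hn
  have key : ∀ i : Fin n,
      |(a i * y i / g (∑ j, x i j * βhat j) -
          (1 - a i) * y i / (1 - g (∑ j, x i j * βhat j))) -
        (a i * y i / g (∑ j, x i j * β j) -
          (1 - a i) * y i / (1 - g (∑ j, x i j * β j)))|
        ≤ 4 * M_X * M_Y * L * Δ / m ^ 2 := by
    intro i
    set g1 := g (∑ j, x i j * βhat j) with hg1def
    set g0 := g (∑ j, x i j * β j) with hg0def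
    obtain ⟨hg0l, hg0u⟩ := hgbd i
    have hdiff : |g1 - g0| ≤ M_X * L * Δ := by
      calc |g1 - g0| ≤ L * |∑ j, x i j * βhat j - ∑ j, x i j * β j| := hg _ _
        _ = L * |∑ j, (x i j * βhat j - x i j * β j)| := by
            rw [Finset.sum_sub_distrib]
        _ ≤ L * ∑ j, |x i j * βhat j - x i j * β j| :=
            mul_le_mul_of_nonneg_left (Finset.abs_sum_le_sum_abs _ _) hL.le
        _ ≤ L * ∑ j, M_X * |βhat j - β j| := by
            gcongr with j
            rw [← mul_sub, abs_mul]
            exact mul_le_mul_of_nonneg_right (hx i j) (abs_nonneg _)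
        _ = M_X * L * Δ := by rw [← Finset.mul_sum]; ring
    have hdm : |g1 - g0| ≤ m / 2 := hdiff.trans hclose
    have h1l : m / 2 ≤ g1 := by
      have := abs_le.1 hdm
      linarith [this.1]
    have h1u : g1 ≤ 1 - m / 2 := by
      have := abs_le.1 hdm
      linarith [this.2]
    have hg0pos : (0:ℝ) < g0 := lt_of_lt_of_le hm hg0l
    have hg1pos : (0:ℝ) < g1 := lt_of_lt_of_le hm2' h1l
    have h1g0pos : (0:ℝ) < 1 - g0 := by linarith
    have h1g1pos : (0:ℝ) < 1 - g1 := by linarith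
    have hai : |a i| ≤ 1 := by rcases ha i with h | h <;> rw [h] <;> norm_num
    have hai' : |1 - a i| ≤ 1 := by rcases ha i with h | h <;> rw [h] <;> norm_num
    have hyb := hy i
    -- treated arm
    have ht : |a i * y i / g1 - a i * y i / g0| ≤ 2 * M_X * M_Y * L * Δ / m ^ 2 := by
      have heq : a i * y i / g1 - a i * y i / g0 = a i * y i * (g0 - g1) / (g1 * g0) := by
        field_simp
      rw [heq, abs_div, abs_mul, abs_mul, abs_of_pos (mul_pos hg1pos hg0pos)]
      rw [abs_sub_comm] at hdiff
      have hnum : |a i| * |y i| * |g0 - g1| ≤ 1 * M_Y * (M_X * L * Δ) :=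
        mul_le_mul (mul_le_mul hai hyb (abs_nonneg _) (by norm_num))
          hdiff (abs_nonneg _) (by positivity)
      have hden : m / 2 * m ≤ g1 * g0 := by
        gcongr
      calc |a i| * |y i| * |g0 - g1| / (g1 * g0)
          ≤ 1 * M_Y * (M_X * L * Δ) / (m / 2 * m) := by
            apply div_le_div₀ (by positivity) hnum (by positivity) hden
        _ = 2 * M_X * M_Y * L * Δ / m ^ 2 := by
            field_simp
    -- control arm
    have hc : |(1 - a i) * y i / (1 - g1) - (1 - a i) * y i / (1 - g0)| ≤
        2 * M_X * M_Y * L * Δ / m ^ 2 := by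
      have heq : (1 - a i) * y i / (1 - g1) - (1 - a i) * y i / (1 - g0) =
          (1 - a i) * y i * (g1 - g0) / ((1 - g1) * (1 - g0)) := by
        field_simp
        ring
      rw [heq, abs_div, abs_mul, abs_mul, abs_of_pos (mul_pos h1g1pos h1g0pos)]
      have hdiff' : |g1 - g0| ≤ M_X * L * Δ := hdiff
      have hnum : |1 - a i| * |y i| * |g1 - g0| ≤ 1 * M_Y * (M_X * L * Δ) :=
        mul_le_mul (mul_le_mul hai' hyb (abs_nonneg _) (by norm_num))
          hdiff' (abs_nonneg _) (by positivity)
      have hden : m / 2 * m ≤ (1 - g1) * (1 - g0) := by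
        gcongr <;> linarith
      calc |1 - a i| * |y i| * |g1 - g0| / ((1 - g1) * (1 - g0))
          ≤ 1 * M_Y * (M_X * L * Δ) / (m / 2 * m) := by
            apply div_le_div₀ (by positivity) hnum (by positivity) hden
        _ = 2 * M_X * M_Y * L * Δ / m ^ 2 := by
            field_simp
    calc |(a i * y i / g1 - (1 - a i) * y i / (1 - g1)) -
        (a i * y i / g0 - (1 - a i) * y i / (1 - g0))|
        = |(a i * y i / g1 - a i * y i / g0) -
            ((1 - a i) * y i / (1 - g1) - (1 - a i) * y i / (1 - g0))| := by ring_nf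
      _ ≤ |a i * y i / g1 - a i * y i / g0| +
            |(1 - a i) * y i / (1 - g1) - (1 - a i) * y i / (1 - g0)| := abs_sub _ _
      _ ≤ 2 * M_X * M_Y * L * Δ / m ^ 2 + 2 * M_X * M_Y * L * Δ / m ^ 2 := by
          exact add_le_add ht hc
      _ = 4 * M_X * M_Y * L * Δ / m ^ 2 := by ring
  simp only
  rw [← mul_sub, ← Finset.sum_sub_distrib, abs_mul, abs_of_pos (by positivity : (0:ℝ) < 1/(n:ℝ))]
  calc (1/(n:ℝ)) * |∑ i, ((a i * y i / g (∑ j, x i j * βhat j) -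
        (1 - a i) * y i / (1 - g (∑ j, x i j * βhat j))) -
        (a i * y i / g (∑ j, x i j * β j) -
        (1 - a i) * y i / (1 - g (∑ j, x i j * β j))))|
      ≤ (1/(n:ℝ)) * ∑ i : Fin n, (4 * M_X * M_Y * L * Δ / m ^ 2) := by
        gcongr
        exact (Finset.abs_sum_le_sum_abs _ _).trans
          (Finset.sum_le_sum fun i _ => key i)
    _ = 4 * M_X * M_Y * L * Δ / m ^ 2 := by
        rw [Finset.sum_const]
        simp [Finset.card_univ]
        field_simp
end

section
/- On a common probability space, let g : ℝ → ℝ be L-Lipschitz (L > 0), β ∈ ℝ^d a fixed vector, and (xᵢ, aᵢ, yᵢ), i = 1, …, n, random elements of ℝ^d × {0,1} × ℝ satisfying almost surely: ‖xᵢ‖_∞ ≤ M_X, |yᵢ| ≤ M_Y, and m ≤ g(xᵢᵀβ) ≤ 1 − m, where M_X, M_Y > 0 and 0 < m < 1/2. Define τ̂(b) = (1/n) Σᵢ ( aᵢyᵢ/g(xᵢᵀb) − (1−aᵢ)yᵢ/(1−g(xᵢᵀb)) ). Let β̂ be an ℝ^d-valued random vector, let τ ∈ ℝ, and suppose B, t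 > 0 satisfy M_X·L·B ≤ m/2, P( ‖β̂ − β‖₁ ≥ B ) ≤ p₁, and P( |τ̂(β) − τ| ≥ t ) ≤ p₂. Then P( |τ̂(β̂) − τ| ≥ 4 M_X M_Y L B / m² + t ) ≤ p₁ + p₂. -/
open MeasureTheory ProbabilityTheory Real
open scoped ENNReal

lemma ipw_aux_div (c G G0 e m D : ℝ) (hm : 0 < m) (hG : m / 2 ≤ G) (hG0 : m ≤ G0)
    (he : |G - G0| ≤ e) (hc : |c| ≤ D) :
    |c / G - c / G0| ≤ 2 * D * e / m ^ 2 := by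
  have hGpos : 0 < G := lt_of_lt_of_le (by linarith) hG
  have hG0pos : 0 < G0 := lt_of_lt_of_le hm hG0
  have key : c / G - c / G0 = c * (G0 - G) / (G * G0) := by
    field_simp
  rw [key, abs_div, abs_mul, abs_of_pos (mul_pos hGpos hG0pos)]
  have h1 : |c| * |G0 - G| ≤ D * e := by
    apply mul_le_mul hc (by rwa [abs_sub_comm]) (abs_nonneg _)
    exact le_trans (abs_nonneg c) hc
  have h2 : m ^ 2 / 2 ≤ G * G0 := by nlinarith
  have hpos : (0:ℝ) < m ^ 2 / 2 := by positivity
  calc |c| * |G0 - G| / (G * G0) ≤ D * e / (m ^ 2 / 2) :=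
        div_le_div₀ (le_trans (mul_nonneg (abs_nonneg _) (abs_nonneg _)) h1) h1 hpos h2
    _ = 2 * D * e / m ^ 2 := by field_simp

/-- Union-bound combination step at the end of the proof of Theorem 1: substituting the estimated
nuisance parameter `β̂` into the IPW estimator, its deviation exceeds
`4 M_X M_Y L B / m² + t` with probability at most `p₁ + p₂`, where `p₁` bounds
`P(‖β̂ − β‖₁ ≥ B)` and `p₂` bounds `P(|τ̂(β) − τ| ≥ t)`. -/
theorem ipw_plugin_union_bound
    {Ω : Type*} [MeasurableSpace Ω] (μ : Measure Ω) [IsProbabilityMeasure μ]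
    {d n : ℕ} (g : ℝ → ℝ) (L : ℝ) (hL : 0 < L)
    (hg : ∀ w₁ w₂, |g w₁ - g w₂| ≤ L * |w₁ - w₂|)
    (β : Fin d → ℝ)
    (x : Fin n → Ω → Fin d → ℝ) (a y : Fin n → Ω → ℝ)
    (hxmeas : ∀ i, Measurable (x i)) (hameas : ∀ i, Measurable (a i))
    (hymeas : ∀ i, Measurable (y i))
    (ha01 : ∀ i ω, a i ω = 0 ∨ a i ω = 1)
    (M_X M_Y m : ℝ) (hMX : 0 < M_X) (hMY : 0 < M_Y) (hm : 0 < m) (hm2 : m < 1 / 2)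
    (hbd : ∀ᵐ ω ∂μ, ∀ i, (∀ j, |x i ω j| ≤ M_X) ∧ |y i ω| ≤ M_Y ∧
      m ≤ g (∑ j, x i ω j * β j) ∧ g (∑ j, x i ω j * β j) ≤ 1 - m)
    (τhat : (Fin d → ℝ) → Ω → ℝ)
    (hτhat : τhat = fun b ω => (1 / n : ℝ) * ∑ i,
      (a i ω * y i ω / g (∑ j, x i ω j * b j)
        - (1 - a i ω) * y i ω / (1 - g (∑ j, x i ω j * b j))))
    (βhat : Ω → Fin d → ℝ) (hβhatmeas : Measurable βhat)
    (τ B t : ℝ) (hB : 0 < B) (ht : 0 < t) (hclose : M_X * L * B ≤ m / 2)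
    (p₁ p₂ : ℝ≥0∞)
    (h1 : μ {ω | B ≤ ∑ j, |βhat ω j - β j|} ≤ p₁)
    (h2 : μ {ω | t ≤ |τhat β ω - τ|} ≤ p₂) :
    μ {ω | 4 * M_X * M_Y * L * B / m ^ 2 + t ≤ |τhat (βhat ω) ω - τ|} ≤ p₁ + p₂ := by
  set C : ℝ := 4 * M_X * M_Y * L * B / m ^ 2 with hC
  have hCpos : 0 < C := by positivity
  -- a.e. inclusion of the bad event into the union
  have hsub : {ω | C + t ≤ |τhat (βhat ω) ω - τ|} ≤ᵐ[μ]
      ({ω | B ≤ ∑ j, |βhat ω j - β j|} ∪ {ω | t ≤ |τhat β ω - τ|} : Set Ω) := by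
    filter_upwards [hbd] with ω hω hE
    show B ≤ ∑ j, |βhat ω j - β j| ∨ t ≤ |τhat β ω - τ|
    by_contra hcon
    push_neg at hcon
    obtain ⟨hb, hτ⟩ := hcon
    -- key estimate: |τhat (βhat ω) ω - τhat β ω| ≤ C
    have hkey : |τhat (βhat ω) ω - τhat β ω| ≤ C := by
      rw [hτhat]
      simp only
      rw [← mul_sub, ← Finset.sum_sub_distrib, abs_mul]
      have hterm : ∀ i : Fin n,
          |(a i ω * y i ω / g (∑ j, x i ω j * βhat ω j)
            - (1 - a i ω) * y i ω / (1 - g (∑ j, x i ω j * βhat ω j)))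
          - (a i ω * y i ω / g (∑ j, x i ω j * β j)
            - (1 - a i ω) * y i ω / (1 - g (∑ j, x i ω j * β j)))| ≤ C := by
        intro i
        obtain ⟨hx, hy, hg1, hg2⟩ := hω i
        set w : ℝ := ∑ j, x i ω j * βhat ω j
        set w0 : ℝ := ∑ j, x i ω j * β j
        have hwdiff : |w - w0| ≤ M_X * B := by
          have : w - w0 = ∑ j, x i ω j * (βhat ω j - β j) := by
            rw [← Finset.sum_sub_distrib]; congr 1; ext j; ring
          rw [this]
          calc |∑ j, x i ω j * (βhat ω j - β j)| ≤ ∑ j, |x i ω j * (βhat ω j - β j)| :=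
                Finset.abs_sum_le_sum_abs _ _
            _ ≤ ∑ j, M_X * |βhat ω j - β j| := by
                apply Finset.sum_le_sum
                intro j _
                rw [abs_mul]
                exact mul_le_mul_of_nonneg_right (hx j) (abs_nonneg _)
            _ = M_X * ∑ j, |βhat ω j - β j| := by rw [Finset.mul_sum]
            _ ≤ M_X * B := mul_le_mul_of_nonneg_left hb.le hMX.le
        have hgdiff : |g w - g w0| ≤ L * (M_X * B) :=
          le_trans (hg w w0) (mul_le_mul_of_nonneg_left hwdiff hL.le)
        have hLMB : L * (M_X * B) ≤ m / 2 := by nlinarith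
        have hgdm : |g w - g w0| ≤ m / 2 := le_trans hgdiff hLMB
        have habs := abs_le.mp hgdm
        have hGlb : m / 2 ≤ g w := by linarith
        have hGub : g w ≤ 1 - m / 2 := by linarith
        have hay : |a i ω * y i ω| ≤ M_Y := by
          rw [abs_mul]
          rcases ha01 i ω with h | h <;> rw [h] <;> simp <;> linarith [abs_nonneg (y i ω), hy]
        have hay2 : |(1 - a i ω) * y i ω| ≤ M_Y := by
          rw [abs_mul]
          rcases ha01 i ω with h | h <;> rw [h] <;> simp <;> linarith [abs_nonneg (y i ω), hy]
        have e1 : |a i ω * y i ω / g w - a i ω * y i ω / g w0|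
            ≤ 2 * M_Y * (L * (M_X * B)) / m ^ 2 :=
          ipw_aux_div _ _ _ _ _ _ hm hGlb hg1 hgdiff hay
        have e2 : |(1 - a i ω) * y i ω / (1 - g w) - (1 - a i ω) * y i ω / (1 - g w0)|
            ≤ 2 * M_Y * (L * (M_X * B)) / m ^ 2 := by
          apply ipw_aux_div _ _ _ _ _ _ hm (by linarith) (by linarith) _ hay2
          rw [show (1 - g w) - (1 - g w0) = -(g w - g w0) by ring, abs_neg]
          exact hgdiff
        have := abs_sub (a i ω * y i ω / g w - a i ω * y i ω / g w0)
        calc |(a i ω * y i ω / g w - (1 - a i ω) * y i ω / (1 - g w))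
              - (a i ω * y i ω / g w0 - (1 - a i ω) * y i ω / (1 - g w0))|
            = |(a i ω * y i ω / g w - a i ω * y i ω / g w0)
              - ((1 - a i ω) * y i ω / (1 - g w) - (1 - a i ω) * y i ω / (1 - g w0))| := by
              ring_nf
          _ ≤ |a i ω * y i ω / g w - a i ω * y i ω / g w0|
              + |(1 - a i ω) * y i ω / (1 - g w) - (1 - a i ω) * y i ω / (1 - g w0)| :=
              abs_sub _ _
          _ ≤ 2 * M_Y * (L * (M_X * B)) / m ^ 2 + 2 * M_Y * (L * (M_X * B)) / m ^ 2 :=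
              add_le_add e1 e2
          _ = 4 * M_X * M_Y * L * B / m ^ 2 := by field_simp; ring
      rcases Nat.eq_zero_or_pos n with hn | hn
      · subst hn; simp [hCpos.le]
      · have hsum : |∑ i : Fin n, ((a i ω * y i ω / g (∑ j, x i ω j * βhat ω j)
            - (1 - a i ω) * y i ω / (1 - g (∑ j, x i ω j * βhat ω j)))
          - (a i ω * y i ω / g (∑ j, x i ω j * β j)
            - (1 - a i ω) * y i ω / (1 - g (∑ j, x i ω j * β j))))| ≤ n * C := by
          calc _ ≤ ∑ i : Fin n, |(a i ω * y i ω / g (∑ j, x i ω j * βhat ω j)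
                - (1 - a i ω) * y i ω / (1 - g (∑ j, x i ω j * βhat ω j)))
              - (a i ω * y i ω / g (∑ j, x i ω j * β j)
                - (1 - a i ω) * y i ω / (1 - g (∑ j, x i ω j * β j)))| :=
                Finset.abs_sum_le_sum_abs _ _
            _ ≤ ∑ _i : Fin n, C := Finset.sum_le_sum fun i _ => hterm i
            _ = n * C := by simp [mul_comm]
        have hnpos : (0:ℝ) < n := Nat.cast_pos.mpr hn
        rw [abs_of_pos (by positivity : (0:ℝ) < 1 / (n:ℝ))]
        calc 1 / (n:ℝ) * |_| ≤ 1 / (n:ℝ) * ((n:ℝ) * C) :=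
              mul_le_mul_of_nonneg_left hsum (by positivity)
          _ = C := by field_simp
    have : |τhat (βhat ω) ω - τ| < C + t := by
      calc |τhat (βhat ω) ω - τ| ≤ |τhat (βhat ω) ω - τhat β ω| + |τhat β ω - τ| := by
            have := abs_sub_abs_le_abs_sub (τhat (βhat ω) ω - τ) (τhat β ω - τ)
            calc |τhat (βhat ω) ω - τ|
                = |(τhat (βhat ω) ω - τhat β ω) + (τhat β ω - τ)| := by ring_nf
              _ ≤ _ := abs_add_le _ _
        _ < C + t := by linarith [hkey]
    exact absurd hE (not_le.mpr this)
  calc μ {ω | C + t ≤ |τhat (βhat ω) ω - τ|}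
      ≤ μ ({ω | B ≤ ∑ j, |βhat ω j - β j|} ∪ {ω | t ≤ |τhat β ω - τ|}) :=
        measure_mono_ae hsub
    _ ≤ μ {ω | B ≤ ∑ j, |βhat ω j - β j|} + μ {ω | t ≤ |τhat β ω - τ|} := measure_union_le _ _
    _ ≤ p₁ + p₂ := add_le_add h1 h2
end
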